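/- If F₁^{σ₁}, F₂^{σ₂} ∈ D⁺ satisfy ρ⁺(F₁^{σ₁}, F₂^{σ₂}) = 0, then F₁ ∘ σ₁⁻¹ = F₂ ∘ σ₂⁻¹ on [0,1], where σᵢ⁻¹ denote the right-continuous inverses. -/

import Mathlib

open Filter

/-- A càdlàg function on `[0,1]`: right-continuous on `[0,1)`, left limits on `(0,1]`. -/
def Cadlag (f : unitInterval → ℝ) : Prop :=
  (∀ t : unitInterval, (t : ℝ) < 1 →
    Filter.Tendsto f (nhdsWithin t (Set.Ioi t)) (nhds (f t))) ∧
  (∀ t : unitInterval, 0 < (t : ℝ) →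
    ∃ l : ℝ, Filter.Tendsto f (nhdsWithin t (Set.Iio t)) (nhds l))

/-- Increasing homeomorphism of `[0,1]` onto itself. -/
def IsIncHomeo (γ : unitInterval → unitInterval) : Prop :=
  Continuous γ ∧ StrictMono γ ∧ Function.Bijective γ

/-- `Σ`: continuous non-decreasing surjections of `[0,1]` onto itself. -/
def InSigma (σ : unitInterval → unitInterval) : Prop :=
  Continuous σ ∧ Monotone σ ∧ Function.Surjective σ

/-- Skorokhod distance on functions on `[0,1]`. -/
noncomputable def skorokhodDist (f g : unitInterval → ℝ) : ℝ :=
  sInf { c : ℝ | ∃ γ : unitInterval → unitInterval, IsIncHomeo γ ∧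
    (⨆ s : unitInterval, |f s - g (γ s)|) + (⨆ s : unitInterval, |(s : ℝ) - (γ s : ℝ)|) = c }

/-- Extended Skorokhod semi-distance on turbofunctions. -/
noncomputable def rhoPlus (P Q : (unitInterval → ℝ) × (unitInterval → unitInterval)) : ℝ :=
  sInf { c : ℝ | ∃ γ : unitInterval → unitInterval, IsIncHomeo γ ∧
    (⨆ t : unitInterval, |P.1 (γ t) - Q.1 t|) +
    (⨆ t : unitInterval, |(P.2 (γ t) : ℝ) - (Q.2 t : ℝ)|) = c }

instance : Fact ((0:ℝ) ≤ 1) := ⟨zero_le_one⟩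

/-- Right-continuous inverse `σ⁻¹(s) = max {t : σ t ≤ s}` (as a supremum). -/
noncomputable def rcInv (σ : unitInterval → unitInterval) (s : unitInterval) : unitInterval :=
  sSup {t : unitInterval | σ t ≤ s}

/-!
For `s < 1` write `tᵢ = σᵢ⁻¹(s)`. Since `σ⁻¹` is the upper adjoint of `σ` (a Galois connection),
`s < σ t ↔ σ⁻¹(s) < t`. Choose `u > t₁` with `F₁ ≈ F₁ t₁` on `(t₁, u)`, then `t > t₂` with
`F₂ t ≈ F₂ t₂` and `s < σ₂ t < σ₁ u`. A time change `γ` that is uniformly close enough on both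
coordinates puts `σ₁ (γ t)` in `(s, σ₁ u)`, hence `γ t ∈ (t₁, u)`, and `F₁ (γ t) ≈ F₂ t`; so
`F₁ t₁ ≈ F₂ t₂`. For `s = 1` both inverses are `1 = γ 1`. Càdlàg functions are bounded, which is
what makes the suprema in `ρ⁺` genuine suprema rather than the junk value `0`.
-/

open Set Topology

theorem bddAbove_range_of_isBoundedUnder_nhds {X : Type*} [TopologicalSpace X] [CompactSpace X]
    {f : X → ℝ} (hf : ∀ x, (𝓝 x).IsBoundedUnder (· ≤ ·) f) : BddAbove (range f) := by
  rw [← image_univ]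
  refine isCompact_univ.induction_on (p := fun s ↦ BddAbove (f '' s)) (by simp)
    (fun s t hst ht ↦ ht.mono (image_mono hst))
    (fun s t hs ht ↦ by simpa only [image_union] using hs.union ht) fun x _ ↦ ?_
  obtain ⟨M, hM⟩ := hf x
  refine ⟨{y | f y ≤ M}, ?_, M, forall_mem_image.2 fun _ hy ↦ hy⟩
  rw [nhdsWithin_univ]
  exact hM

theorem Monotone.map_bot_of_surjective {α β : Type*} [Preorder α] [OrderBot α] [PartialOrder β]
    [OrderBot β] {f : α → β} (hf : Monotone f) (hs : Function.Surjective f) : f ⊥ = ⊥ := by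
  obtain ⟨a, ha⟩ := hs ⊥
  exact le_bot_iff.1 (ha ▸ hf bot_le)

theorem Monotone.map_top_of_surjective {α β : Type*} [Preorder α] [OrderTop α] [PartialOrder β]
    [OrderTop β] {f : α → β} (hf : Monotone f) (hs : Function.Surjective f) : f ⊤ = ⊤ := by
  obtain ⟨a, ha⟩ := hs ⊤
  exact top_le_iff.1 (ha ▸ hf le_top)

namespace Cadlag

variable {f : unitInterval → ℝ}

theorem continuousWithinAt_Ici (hf : Cadlag f) (t : unitInterval) :
    ContinuousWithinAt f (Ici t) t := by
  rcases (unitInterval.le_one' (t := t)).lt_or_eq with ht | rfl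
  · exact continuousWithinAt_Ioi_iff_Ici.1 (hf.1 t ht)
  · rw [show Ici (1 : unitInterval) = {1} from Ici_top]
    exact continuousWithinAt_singleton

theorem exists_tendsto_nhdsLT (hf : Cadlag f) (t : unitInterval) :
    ∃ l, Tendsto f (𝓝[<] t) (𝓝 l) := by
  rcases (unitInterval.nonneg' (t := t)).lt_or_eq with ht | rfl
  · exact hf.2 t ht
  · rw [show Iio (0 : unitInterval) = ∅ from Iio_bot, nhdsWithin_empty]
    exact ⟨0, tendsto_bot⟩

theorem isBoundedUnder_abs_nhds (hf : Cadlag f) (t : unitInterval) :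
    (𝓝 t).IsBoundedUnder (· ≤ ·) fun u ↦ |f u| := by
  obtain ⟨l, hl⟩ := hf.exists_tendsto_nhdsLT t
  rw [← nhdsLT_sup_nhdsGE, IsBoundedUnder, map_sup]
  exact isBounded_sup hl.abs.isBoundedUnder_le
    (hf.continuousWithinAt_Ici t).tendsto.abs.isBoundedUnder_le

theorem bddAbove_range_abs (hf : Cadlag f) : BddAbove (range fun t ↦ |f t|) :=
  bddAbove_range_of_isBoundedUnder_nhds hf.isBoundedUnder_abs_nhds

end Cadlag

theorem IsIncHomeo.map_one {γ : unitInterval → unitInterval} (hγ : IsIncHomeo γ) : γ 1 = 1 :=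
  hγ.2.1.monotone.map_top_of_surjective hγ.2.2.2

namespace InSigma

variable {σ : unitInterval → unitInterval}

theorem map_zero (hσ : InSigma σ) : σ 0 = 0 :=
  hσ.2.1.map_bot_of_surjective hσ.2.2

theorem map_one (hσ : InSigma σ) : σ 1 = 1 :=
  hσ.2.1.map_top_of_surjective hσ.2.2

theorem gc_rcInv (hσ : InSigma σ) : GaloisConnection σ (rcInv σ) := by
  refine fun t s ↦ ⟨fun h ↦ le_sSup h, fun h ↦ (hσ.2.1 h).trans ?_⟩
  have hne : {t | σ t ≤ s}.Nonempty := ⟨0, hσ.map_zero.trans_le unitInterval.nonneg'⟩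
  exact (isClosed_le hσ.1 continuous_const).isCompact.sSup_mem hne

theorem rcInv_lt_one (hσ : InSigma σ) {s : unitInterval} (hs : s < 1) : rcInv σ s < 1 :=
  hσ.gc_rcInv.lt_iff_lt.1 (hσ.map_one.symm ▸ hs)

end InSigma

theorem rcInv_one (σ : unitInterval → unitInterval) : rcInv σ 1 = 1 :=
  top_unique (le_sSup (show σ 1 ≤ 1 from unitInterval.le_one'))

theorem exists_isIncHomeo_near_of_rhoPlus_eq_zero {F₁ F₂ : unitInterval → ℝ}
    {σ₁ σ₂ : unitInterval → unitInterval} (hF₁ : BddAbove (range fun t ↦ |F₁ t|))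
    (hF₂ : BddAbove (range fun t ↦ |F₂ t|)) (h : rhoPlus (F₁, σ₁) (F₂, σ₂) = 0) {ε : ℝ}
    (hε : 0 < ε) :
    ∃ γ, IsIncHomeo γ ∧ ∀ t, |F₁ (γ t) - F₂ t| < ε ∧ |(σ₁ (γ t) : ℝ) - σ₂ t| < ε := by
  have hρ : rhoPlus (F₁, σ₁) (F₂, σ₂) < ε := h ▸ hε
  obtain ⟨_, ⟨γ, hγ, rfl⟩, hlt⟩ := exists_lt_of_csInf_lt
    (by exact ⟨_, id, ⟨continuous_id, strictMono_id, Function.bijective_id⟩, rfl⟩) hρ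
  obtain ⟨M₁, hM₁⟩ := hF₁
  obtain ⟨M₂, hM₂⟩ := hF₂
  have hbdd₁ : BddAbove (range fun t ↦ |F₁ (γ t) - F₂ t|) :=
    ⟨M₁ + M₂, forall_mem_range.2 fun t ↦
      (abs_sub _ _).trans (add_le_add (hM₁ ⟨γ t, rfl⟩) (hM₂ ⟨t, rfl⟩))⟩
  have hbdd₂ : BddAbove (range fun t ↦ |(σ₁ (γ t) : ℝ) - σ₂ t|) :=
    ⟨1, forall_mem_range.2 fun t ↦ abs_sub_le_iff.2
      ⟨by linarith [unitInterval.nonneg (σ₂ t), unitInterval.le_one (σ₁ (γ t))],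
       by linarith [unitInterval.nonneg (σ₁ (γ t)), unitInterval.le_one (σ₂ t)]⟩⟩
  have hsup₁ := Real.iSup_nonneg fun t ↦ abs_nonneg (F₁ (γ t) - F₂ t)
  have hsup₂ := Real.iSup_nonneg fun t ↦ abs_nonneg ((σ₁ (γ t) : ℝ) - σ₂ t)
  exact ⟨γ, hγ, fun t ↦ ⟨by linarith [le_ciSup hbdd₁ t], by linarith [le_ciSup hbdd₂ t]⟩⟩

theorem apply_rcInv_eq_of_forall_exists_near {F₁ F₂ : unitInterval → ℝ}
    {σ₁ σ₂ : unitInterval → unitInterval} (hσ₁ : InSigma σ₁) (hσ₂ : InSigma σ₂)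
    {s : unitInterval} (hs : s < 1)
    (hF₁ : ContinuousWithinAt F₁ (Ioi (rcInv σ₁ s)) (rcInv σ₁ s))
    (hF₂ : ContinuousWithinAt F₂ (Ioi (rcInv σ₂ s)) (rcInv σ₂ s))
    (hnear : ∀ ε > 0, ∀ t, ∃ x, |F₁ x - F₂ t| < ε ∧ |(σ₁ x : ℝ) - σ₂ t| < ε) :
    F₁ (rcInv σ₁ s) = F₂ (rcInv σ₂ s) := by
  set t₁ := rcInv σ₁ s
  set t₂ := rcInv σ₂ s
  refine eq_of_forall_dist_le fun ε hε ↦ ?_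
  obtain ⟨u, hu, hF₁u⟩ : ∃ u ∈ Ioi t₁, Ioo t₁ u ⊆ {x | dist (F₁ x) (F₁ t₁) < ε / 3} :=
    (mem_nhdsGT_iff_exists_Ioo_subset' (hσ₁.rcInv_lt_one hs)).1
      (Metric.tendsto_nhds.1 hF₁ _ (by positivity))
  have hsu : s < σ₁ u := hσ₁.gc_rcInv.lt_iff_lt.2 hu
  have : (𝓝[>] t₂).NeBot := nhdsGT_neBot_of_exists_gt ⟨1, hσ₂.rcInv_lt_one hs⟩
  obtain ⟨t, ht, hF₂t, htu⟩ : ∃ t > t₂, dist (F₂ t) (F₂ t₂) < ε / 3 ∧ σ₂ t < σ₁ u :=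
    (eventually_mem_nhdsWithin.and <| (Metric.tendsto_nhds.1 hF₂ _ (by positivity)).and <|
      nhdsWithin_le_nhds <| (hσ₂.1.tendsto t₂).eventually_lt_const
        ((hσ₂.gc_rcInv.l_u_le s).trans_lt hsu)).exists
  have hst : s < σ₂ t := hσ₂.gc_rcInv.lt_iff_lt.2 ht
  obtain ⟨x, hFx, hσx⟩ := hnear (min (ε / 3) (min ((σ₂ t : ℝ) - s) ((σ₁ u : ℝ) - σ₂ t)))
    (lt_min (by positivity) (lt_min (sub_pos.2 hst) (sub_pos.2 htu))) t
  have hσx' := abs_lt.1 (hσx.trans_le (min_le_right _ _))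
  have hx : x ∈ Ioo t₁ u := by
    refine ⟨hσ₁.gc_rcInv.lt_iff_lt.1 ?_, hσ₁.2.1.reflect_lt ?_⟩
    · change (s : ℝ) < σ₁ x
      linarith [min_le_left ((σ₂ t : ℝ) - s) ((σ₁ u : ℝ) - σ₂ t)]
    · change (σ₁ x : ℝ) < σ₁ u
      linarith [min_le_right ((σ₂ t : ℝ) - s) ((σ₁ u : ℝ) - σ₂ t)]
  have hF₁x : dist (F₁ x) (F₁ t₁) < ε / 3 := hF₁u hx
  have hFxt : dist (F₁ x) (F₂ t) < ε / 3 := hFx.trans_le (min_le_left _ _)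
  calc dist (F₁ t₁) (F₂ t₂) ≤ dist (F₁ t₁) (F₁ x) + dist (F₁ x) (F₂ t) + dist (F₂ t) (F₂ t₂) :=
        dist_triangle4 _ _ _ _
    _ ≤ ε := by linarith [dist_comm (F₁ t₁) (F₁ x)]

theorem equiv_implies_visualizations_eq (F₁ F₂ : unitInterval → ℝ)
    (σ₁ σ₂ : unitInterval → unitInterval)
    (hF₁ : Cadlag F₁) (hF₂ : Cadlag F₂) (hσ₁ : InSigma σ₁) (hσ₂ : InSigma σ₂)
    (h : rhoPlus (F₁, σ₁) (F₂, σ₂) = 0) :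
    ∀ s : unitInterval, F₁ (rcInv σ₁ s) = F₂ (rcInv σ₂ s) := by
  have hnear := fun ε (hε : 0 < ε) ↦ exists_isIncHomeo_near_of_rhoPlus_eq_zero
    hF₁.bddAbove_range_abs hF₂.bddAbove_range_abs h hε
  intro s
  rcases (unitInterval.le_one' (t := s)).lt_or_eq with hs | rfl
  · refine apply_rcInv_eq_of_forall_exists_near hσ₁ hσ₂ hs (hF₁.1 _ (hσ₁.rcInv_lt_one hs))
      (hF₂.1 _ (hσ₂.rcInv_lt_one hs)) fun ε hε t ↦ ?_
    obtain ⟨γ, -, hγ⟩ := hnear ε hε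
    exact ⟨γ t, hγ t⟩
  · rw [rcInv_one, rcInv_one]
    refine eq_of_forall_dist_le fun ε hε ↦ ?_
    obtain ⟨γ, hγ, hclose⟩ := hnear ε hε
    simpa only [hγ.map_one, Real.dist_eq] using (hclose 1).1.le
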